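/- Let F(x) = ∑_{i=1}^n f_i(x) with f_i(x) = ψ_i(a_iᵀx), ψ_i'' ∈ [1/M, M], AᵀA ≻ 0, minimizer x*. Let p be a probability vector over [n] with p_k = τ_k/∑τ_j, τ_k = min(1, 20u_k log d), u_k ≥ σ_k(A). For any x̃, define f̃_k(x) := (1/p_k)(f_k(x) − ∇f_k(x̃)ᵀx) + ∇F(x̃)ᵀx. Then E_{k∼p}[‖∇f̃_k(x*)‖²_{(AᵀA)^{-1}}] ≤ 2(∑_j τ_j)·M·(F(x̃) − F(x*)). -/

import Mathlib

/-!
Write `vₖ = ∇fₖ(x*) - ∇fₖ(x̃) = (ψₖ'(aₖᵀx*) - ψₖ'(aₖᵀx̃)) aₖ`. Since `∇F(x*) = 0`, we have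
`∑ₖ vₖ = -∇F(x̃)`, so the left-hand side is the variance of the importance-sampled estimator
`vₖ / pₖ`, which is at most `∑ₖ ‖vₖ‖² / pₖ`. In the `(AᵀA)⁻¹`-norm, `‖aₖ‖²` is the leverage score
`σₖ ≤ min(1, uₖ) ≤ τₖ`, so each term is at most `(∑ⱼ τⱼ) (ψₖ'(aₖᵀx*) - ψₖ'(aₖᵀx̃))²`. Finally,
one-dimensional co-coercivity of the convex, `M`-smooth `ψₖ` bounds the sum of these squares by
`2M` times the sum of the Bregman divergences of the `ψₖ`, which is `2M (F(x̃) - F(x*))`.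
-/

open Matrix BigOperators

open Set in
theorem ConvexOn.add_deriv_mul_sub_le {f : ℝ → ℝ} (hf : ConvexOn ℝ univ f) {x : ℝ}
    (hfx : DifferentiableAt ℝ f x) (y : ℝ) : f x + deriv f x * (y - x) ≤ f y := by
  rcases lt_trichotomy x y with hxy | rfl | hxy
  · have := hf.deriv_le_slope (mem_univ x) (mem_univ y) hxy hfx
    rw [slope_def_field, le_div_iff₀ (sub_pos.mpr hxy)] at this
    linarith
  · simp
  · have := hf.slope_le_deriv (mem_univ y) (mem_univ x) hxy hfx
    rw [slope_def_field, div_le_iff₀ (sub_pos.mpr hxy)] at this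
    linarith

theorem differentiable_deriv_of_contDiff_two {ψ : ℝ → ℝ} (h : ContDiff ℝ 2 ψ) :
    Differentiable ℝ (deriv ψ) :=
  (h.deriv' (n := 1)).differentiable one_ne_zero

theorem hasDerivAt_half_mul_sq_sub {ψ : ℝ → ℝ} {t : ℝ} (hψ : DifferentiableAt ℝ ψ t) (M : ℝ) :
    HasDerivAt (fun s => M / 2 * s ^ 2 - ψ s) (M * t - deriv ψ t) t := by
  refine (((hasDerivAt_pow 2 t).const_mul (M / 2)).fun_sub hψ.hasDerivAt).congr_deriv ?_
  norm_num
  ring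

theorem convexOn_half_mul_sq_sub_of_deriv2_le {ψ : ℝ → ℝ} (hψ : Differentiable ℝ ψ)
    (hψ' : Differentiable ℝ (deriv ψ)) {M : ℝ} (hM : ∀ t, deriv (deriv ψ) t ≤ M) :
    ConvexOn ℝ Set.univ (fun s => M / 2 * s ^ 2 - ψ s) := by
  have hderiv : deriv (fun s => M / 2 * s ^ 2 - ψ s) = fun t => M * t - deriv ψ t :=
    funext fun t => (hasDerivAt_half_mul_sq_sub (hψ t) M).deriv
  refine Monotone.convexOn_univ_of_deriv
    (fun t => (hasDerivAt_half_mul_sq_sub (hψ t) M).differentiableAt) fun x y hxy => ?_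
  have := image_sub_le_mul_sub_of_deriv_le hψ' hM hxy
  simp only [hderiv]
  linarith

/-- Evaluate the tangent line of `ψ` at `a` and the quadratic upper bound of `ψ` at `b` at the
point `b - (ψ' b - ψ' a) / M`. -/
theorem sq_deriv_sub_le_of_convexOn {ψ : ℝ → ℝ} {M : ℝ} (hM : 0 < M) (hψ : Differentiable ℝ ψ)
    (hconv : ConvexOn ℝ Set.univ ψ)
    (hsmooth : ConvexOn ℝ Set.univ (fun s => M / 2 * s ^ 2 - ψ s)) (a b : ℝ) :
    (deriv ψ a - deriv ψ b) ^ 2 ≤ 2 * M * (ψ b - ψ a - deriv ψ a * (b - a)) := by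
  set s := (deriv ψ b - deriv ψ a) / M with hs
  have hψb : deriv ψ b = deriv ψ a + M * s := by
    rw [hs]
    field_simp
    ring
  have lower := hconv.add_deriv_mul_sub_le (hψ a) (b - s)
  have upper := hsmooth.add_deriv_mul_sub_le
    (hasDerivAt_half_mul_sq_sub (hψ b) M).differentiableAt (b - s)
  rw [(hasDerivAt_half_mul_sq_sub (hψ b) M).deriv, hψb] at upper
  rw [hψb]
  nlinarith

theorem hasDerivAt_comp_dotProduct_add_smul {m : Type*} [Fintype m] {ψ : ℝ → ℝ} {a x : m → ℝ}
    (hψ : DifferentiableAt ℝ ψ (a ⬝ᵥ x)) (v : m → ℝ) :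
    HasDerivAt (fun t : ℝ => ψ (a ⬝ᵥ (x + t • v))) (deriv ψ (a ⬝ᵥ x) * (a ⬝ᵥ v)) 0 := by
  have hline : HasDerivAt (fun t : ℝ => a ⬝ᵥ (x + t • v)) (a ⬝ᵥ v) 0 := by
    simp only [dotProduct_add, dotProduct_smul, smul_eq_mul]
    simpa using ((hasDerivAt_id (0 : ℝ)).mul_const (a ⬝ᵥ v)).const_add (a ⬝ᵥ x)
  exact hψ.hasDerivAt.comp_of_eq 0 hline (by simp)

/-- `(fun i => ψᵢ'(aᵢᵀx)) ᵥ* A = ∑ᵢ ψᵢ'(aᵢᵀx) aᵢ` is the gradient of `y ↦ ∑ᵢ ψᵢ(aᵢᵀy)` at `x`. -/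
theorem vecMul_deriv_eq_zero_of_isMinOn {ι m : Type*} [Fintype ι] [Fintype m]
    (A : Matrix ι m ℝ) {ψ : ι → ℝ → ℝ} (hψ : ∀ i, Differentiable ℝ (ψ i)) {x : m → ℝ}
    (hx : IsMinOn (fun y => ∑ i, ψ i (A i ⬝ᵥ y)) Set.univ x) :
    (fun i => deriv (ψ i) (A i ⬝ᵥ x)) ᵥ* A = 0 := by
  set G := (fun i => deriv (ψ i) (A i ⬝ᵥ x)) ᵥ* A
  have hG : G ⬝ᵥ G = ∑ i, deriv (ψ i) (A i ⬝ᵥ x) * (A i ⬝ᵥ G) := by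
    rw [← dotProduct_mulVec]
    rfl
  have hderiv : HasDerivAt (fun t : ℝ => ∑ i, ψ i (A i ⬝ᵥ (x + t • G))) (G ⬝ᵥ G) 0 :=
    hG ▸ HasDerivAt.fun_sum fun i _ => hasDerivAt_comp_dotProduct_add_smul (hψ i _) G
  have hmin : IsLocalMin (fun t : ℝ => ∑ i, ψ i (A i ⬝ᵥ (x + t • G))) 0 :=
    IsMinOn.isLocalMin (fun t _ => by simpa using hx (Set.mem_univ (x + t • G)))
      Filter.univ_mem
  exact dotProduct_self_eq_zero.mp (hmin.hasDerivAt_eq_zero hderiv)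

theorem sum_sq_deriv_sub_le {ι m : Type*} [Fintype ι] [Fintype m] (A : Matrix ι m ℝ)
    {ψ : ι → ℝ → ℝ} {M : ℝ} (hM : 0 < M) (hψ : ∀ i, Differentiable ℝ (ψ i))
    (hconv : ∀ i, ConvexOn ℝ Set.univ (ψ i))
    (hsmooth : ∀ i, ConvexOn ℝ Set.univ (fun s => M / 2 * s ^ 2 - ψ i s)) {x : m → ℝ}
    (hx : (fun i => deriv (ψ i) (A i ⬝ᵥ x)) ᵥ* A = 0) (y : m → ℝ) :
    ∑ i, (deriv (ψ i) (A i ⬝ᵥ x) - deriv (ψ i) (A i ⬝ᵥ y)) ^ 2 ≤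
      2 * M * (∑ i, ψ i (A i ⬝ᵥ y) - ∑ i, ψ i (A i ⬝ᵥ x)) := by
  have hfirst : ∑ i, deriv (ψ i) (A i ⬝ᵥ x) * (A i ⬝ᵥ y - A i ⬝ᵥ x) = 0 := by
    have : (fun i => deriv (ψ i) (A i ⬝ᵥ x)) ⬝ᵥ (A *ᵥ (y - x)) = 0 := by
      rw [dotProduct_mulVec, hx, zero_dotProduct]
    rw [mulVec_sub, dotProduct] at this
    exact this
  calc ∑ i, (deriv (ψ i) (A i ⬝ᵥ x) - deriv (ψ i) (A i ⬝ᵥ y)) ^ 2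
      ≤ ∑ i, 2 * M * (ψ i (A i ⬝ᵥ y) - ψ i (A i ⬝ᵥ x) -
          deriv (ψ i) (A i ⬝ᵥ x) * (A i ⬝ᵥ y - A i ⬝ᵥ x)) :=
        Finset.sum_le_sum fun i _ => sq_deriv_sub_le_of_convexOn hM (hψ i) (hconv i) (hsmooth i) _ _
    _ = 2 * M * (∑ i, ψ i (A i ⬝ᵥ y) - ∑ i, ψ i (A i ⬝ᵥ x)) := by
        rw [← Finset.mul_sum, Finset.sum_sub_distrib, Finset.sum_sub_distrib, hfirst, sub_zero]

section Leverage

variable {m n : Type*} [Fintype m] [Fintype n] [DecidableEq n]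

noncomputable def leverageScore (A : Matrix m n ℝ) (k : m) : ℝ := A k ⬝ᵥ ((Aᵀ * A)⁻¹ *ᵥ A k)

theorem leverageScore_nonneg (A : Matrix m n ℝ) (k : m) : 0 ≤ leverageScore A k := by
  simpa [leverageScore, conjTranspose_eq_transpose_of_trivial] using
    (posSemidef_conjTranspose_mul_self A).inv.dotProduct_mulVec_nonneg (A k)

theorem leverageScore_le_one (A : Matrix m n ℝ) (hA : IsUnit (Aᵀ * A).det) (k : m) :
    leverageScore A k ≤ 1 := by
  set w := (Aᵀ * A)⁻¹ *ᵥ A k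
  have hw : (Aᵀ * A) *ᵥ w = A k := by
    rw [mulVec_mulVec, mul_nonsing_inv _ hA, one_mulVec]
  have hnorm : (A *ᵥ w) ⬝ᵥ (A *ᵥ w) = A k ⬝ᵥ w := by
    rw [dotProduct_mulVec, ← mulVec_transpose, mulVec_mulVec, hw, dotProduct_comm]
  have hcoord : (A k ⬝ᵥ w) ^ 2 ≤ A k ⬝ᵥ w :=
    calc (A k ⬝ᵥ w) ^ 2 = (A *ᵥ w) k * (A *ᵥ w) k := sq _
      _ ≤ (A *ᵥ w) ⬝ᵥ (A *ᵥ w) := Finset.single_le_sum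
          (f := fun i => (A *ᵥ w) i * (A *ᵥ w) i) (fun i _ => mul_self_nonneg _) (Finset.mem_univ k)
      _ = A k ⬝ᵥ w := hnorm
  change A k ⬝ᵥ w ≤ 1
  nlinarith

end Leverage

theorem le_min_one_twenty_mul_log {σ u : ℝ} {d : ℕ} (hd : 2 ≤ d) (hσ0 : 0 ≤ σ) (hσ1 : σ ≤ 1)
    (hσu : σ ≤ u) : σ ≤ min 1 (20 * u * Real.log d) := by
  have hlog : 1 ≤ 20 * Real.log d := by
    have : Real.log 2 ≤ Real.log d := Real.log_le_log two_pos (by exact_mod_cast hd)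
    linarith [Real.log_two_gt_d9]
  exact le_min hσ1 (by nlinarith)

/-- The cross term contributes `-2 ‖G‖²_B` because `∑ₖ vₖ = -G`: this is
`E ‖X - E X‖² ≤ E ‖X‖²` for `X = vₖ / pₖ`. -/
theorem importance_sampling_variance_le {ι m : Type*} [Fintype ι] [Fintype m]
    {B : Matrix m m ℝ} (hB : B.PosSemidef) {p : ι → ℝ} (hp : ∑ k, p k = 1) {v : ι → m → ℝ}
    (hpv : ∀ k, p k = 0 → v k = 0) {G : m → ℝ} (hvG : ∑ k, v k = -G) :
    ∑ k, p k * (((1 / p k) • v k + G) ⬝ᵥ (B *ᵥ ((1 / p k) • v k + G))) ≤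
      ∑ k, v k ⬝ᵥ (B *ᵥ v k) / p k := by
  have hBt : Bᵀ = B := by
    rw [← conjTranspose_eq_transpose_of_trivial]
    exact hB.isHermitian
  have hexpand : ∀ k, p k * (((1 / p k) • v k + G) ⬝ᵥ (B *ᵥ ((1 / p k) • v k + G))) =
      v k ⬝ᵥ (B *ᵥ v k) / p k + 2 * (v k ⬝ᵥ (B *ᵥ G)) + p k * (G ⬝ᵥ (B *ᵥ G)) := by
    intro k
    rcases eq_or_ne (p k) 0 with hk | hk
    · simp [hk, hpv k hk]
    have hsymm : G ⬝ᵥ (B *ᵥ v k) = v k ⬝ᵥ (B *ᵥ G) := by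
      rw [dotProduct_mulVec, ← mulVec_transpose, hBt, dotProduct_comm]
    simp only [mulVec_add, mulVec_smul, dotProduct_add, add_dotProduct, smul_dotProduct,
      dotProduct_smul, smul_eq_mul, hsymm]
    field_simp
    ring
  have hG : 0 ≤ G ⬝ᵥ (B *ᵥ G) := by simpa using hB.dotProduct_mulVec_nonneg G
  rw [Finset.sum_congr rfl fun k _ => hexpand k, Finset.sum_add_distrib, Finset.sum_add_distrib,
    ← Finset.mul_sum, ← sum_dotProduct, hvG, ← Finset.sum_mul, hp, neg_dotProduct]
  linarith

theorem leverage_sampling_variance_le {ι m : Type*} [Fintype ι] [Fintype m]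
    (A : Matrix ι m ℝ) {B : Matrix m m ℝ} (hB : B.PosDef) {τ p : ι → ℝ}
    (hτ : ∀ k, A k ⬝ᵥ (B *ᵥ A k) ≤ τ k) (hp : ∀ k, p k = τ k / ∑ j, τ j) (c : ι → ℝ)
    {G : m → ℝ} (hG : ∑ k, c k • A k = -G) :
    ∑ k, p k * (((1 / p k) • (c k • A k) + G) ⬝ᵥ (B *ᵥ ((1 / p k) • (c k • A k) + G))) ≤
      (∑ j, τ j) * ∑ k, c k ^ 2 := by
  set S := ∑ j, τ j
  have hσ0 : ∀ k, 0 ≤ A k ⬝ᵥ (B *ᵥ A k) := fun k => by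
    simpa using hB.posSemidef.dotProduct_mulVec_nonneg (A k)
  have hτ0 : ∀ k, 0 ≤ τ k := fun k => (hσ0 k).trans (hτ k)
  rcases (show 0 ≤ S from Finset.sum_nonneg fun k _ => hτ0 k).eq_or_lt with hS | hS
  · simp [hp, ← hS]
  have hp1 : ∑ k, p k = 1 := by
    simp only [hp]
    rw [← Finset.sum_div, div_self hS.ne']
  have hpv : ∀ k, p k = 0 → c k • A k = 0 := by
    intro k hk
    rw [hp, div_eq_zero_iff, or_iff_left hS.ne'] at hk
    suffices A k = 0 by rw [this, smul_zero]
    by_contra h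
    linarith [hτ k, show 0 < A k ⬝ᵥ (B *ᵥ A k) by simpa using hB.dotProduct_mulVec_pos h]
  have hterm : ∀ k, (c k • A k) ⬝ᵥ (B *ᵥ (c k • A k)) / p k ≤ S * c k ^ 2 := by
    intro k
    rw [hp, mulVec_smul, dotProduct_smul, smul_dotProduct, smul_eq_mul, smul_eq_mul,
      div_div_eq_mul_div]
    refine div_le_of_le_mul₀ (hτ0 k) (by positivity) ?_
    nlinarith [mul_le_mul_of_nonneg_left (hτ k) (mul_nonneg (sq_nonneg (c k)) hS.le)]
  calc _ ≤ ∑ k, (c k • A k) ⬝ᵥ (B *ᵥ (c k • A k)) / p k :=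
        importance_sampling_variance_le hB.posSemidef hp1 hpv hG
    _ ≤ ∑ k, S * c k ^ 2 := Finset.sum_le_sum fun k _ => hterm k
    _ = S * ∑ k, c k ^ 2 := (Finset.mul_sum _ _ _).symm

theorem stmt_19 {n d : ℕ} (hd : 2 ≤ d) (A : Matrix (Fin n) (Fin d) ℝ)
    (hPD : (Aᵀ * A).PosDef)
    (ψ : Fin n → ℝ → ℝ) (M : ℝ) (hM : 1 ≤ M)
    (hψd : ∀ i, ContDiff ℝ 2 (ψ i))
    (hψ : ∀ i t, 1 / M ≤ deriv (deriv (ψ i)) t ∧ deriv (deriv (ψ i)) t ≤ M)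
    (u τ p : Fin n → ℝ)
    (hu : ∀ k, A k ⬝ᵥ ((Aᵀ * A)⁻¹ *ᵥ A k) ≤ u k)
    (hτ : ∀ k, τ k = min 1 (20 * u k * Real.log d))
    (hp : ∀ k, p k = τ k / ∑ j, τ j)
    (F : (Fin d → ℝ) → ℝ) (hF : ∀ x, F x = ∑ i, ψ i (A i ⬝ᵥ x))
    (xs xt : Fin d → ℝ) (hxs : IsMinOn F Set.univ xs)
    (g : Fin n → (Fin d → ℝ) → (Fin d → ℝ))
    (hg : ∀ k x, g k x = deriv (ψ k) (A k ⬝ᵥ x) • A k) :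
    ∑ k, p k *
      (((1 / p k) • (g k xs - g k xt) + ∑ j, g j xt) ⬝ᵥ
        ((Aᵀ * A)⁻¹ *ᵥ ((1 / p k) • (g k xs - g k xt) + ∑ j, g j xt))) ≤
      2 * (∑ j, τ j) * M * (F xt - F xs) := by
  have hψ1 : ∀ i, Differentiable ℝ (ψ i) := fun i => (hψd i).differentiable two_ne_zero
  have hψ2 : ∀ i, Differentiable ℝ (deriv (ψ i)) :=
    fun i => differentiable_deriv_of_contDiff_two (hψd i)
  have hconv : ∀ i, ConvexOn ℝ Set.univ (ψ i) := fun i =>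
    convexOn_univ_of_deriv2_nonneg (hψ1 i) (hψ2 i) fun t => by
      simpa using (one_div_pos.mpr (by linarith)).le.trans (hψ i t).1
  have hsmooth : ∀ i, ConvexOn ℝ Set.univ (fun s => M / 2 * s ^ 2 - ψ i s) :=
    fun i => convexOn_half_mul_sq_sub_of_deriv2_le (hψ1 i) (hψ2 i) fun t => (hψ i t).2
  have hστ : ∀ k, leverageScore A k ≤ τ k := fun k => (hτ k).symm ▸
    le_min_one_twenty_mul_log hd (leverageScore_nonneg A k)
      (leverageScore_le_one A hPD.det_pos.ne'.isUnit k) (hu k)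
  set α := fun k => deriv (ψ k) (A k ⬝ᵥ xs)
  set β := fun k => deriv (ψ k) (A k ⬝ᵥ xt)
  have hgrad : α ᵥ* A = 0 :=
    vecMul_deriv_eq_zero_of_isMinOn A hψ1 (by rwa [show F = _ from funext hF] at hxs)
  have hv : ∀ k, g k xs - g k xt = (α k - β k) • A k := fun k => by rw [hg, hg, sub_smul]
  have hvsum : ∑ k, (α k - β k) • A k = -∑ j, g j xt := by
    simp only [sub_smul, Finset.sum_sub_distrib, hg, ← vecMul_eq_sum, hgrad, zero_sub]
    rfl
  calc _ ≤ (∑ j, τ j) * ∑ k, (α k - β k) ^ 2 := by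
        simp only [hv]
        exact leverage_sampling_variance_le A hPD.inv hστ hp _ hvsum
    _ ≤ (∑ j, τ j) * (2 * M * (F xt - F xs)) := by
        gcongr
        · exact Finset.sum_nonneg fun k _ => (leverageScore_nonneg A k).trans (hστ k)
        · rw [hF, hF]
          exact sum_sq_deriv_sub_le A (by linarith) hψ1 hconv hsmooth hgrad xt
    _ = 2 * (∑ j, τ j) * M * (F xt - F xs) := by ring
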